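/- If γ is a column and u, v are words with γu ≡_styl γv, then γ·u = γ·v (the right actions of u and v send γ to the same column). -/

import Mathlib

noncomputable section

open FreeMonoid

/-- The defining relations of the stylic congruence: the Knuth (plactic)
relations together with the idempotent relations `a² ≡ a`. -/
inductive StylicRel (A : Type*) [LinearOrder A] : FreeMonoid A → FreeMonoid A → Prop
  | knuth1 {a b c : A} : a < b → b < c →
      StylicRel A (ofList [b, a, c]) (ofList [b, c, a])
  | knuth2 {a b c : A} : a < b → b < c →
      StylicRel A (ofList [a, c, b]) (ofList [c, a, b])
  | knuth3 {a b : A} : a < b →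
      StylicRel A (ofList [b, a, b]) (ofList [b, b, a])
  | knuth4 {a b : A} : a < b →
      StylicRel A (ofList [a, b, a]) (ofList [b, a, a])
  | idem (a : A) : StylicRel A (ofList [a, a]) (ofList [a])

/-- The stylic congruence on the free monoid `A*`. -/
def stylCon (A : Type*) [LinearOrder A] : Con (FreeMonoid A) := conGen (StylicRel A)

/-- The stylic monoid `Styl(A)`. -/
abbrev Styl (A : Type*) [LinearOrder A] := (stylCon A).Quotient

/-- Right action of a letter `c` on a column `γ`: if `c < min γ` then
`γ ∪ {c}`; otherwise replace `max {x ∈ γ : x ≤ c}` (the bumped letter) by `c`. -/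
def rIns {A : Type*} [LinearOrder A] (γ : Finset A) (c : A) : Finset A :=
  if h : (γ.filter (· ≤ c)).Nonempty then
    insert c (γ.erase ((γ.filter (· ≤ c)).max' h))
  else insert c γ

/-- Schensted left column insertion of a letter `b` into a column `δ`:
if `b > max δ` then `δ ∪ {b}`; otherwise replace `min {x ∈ δ : x ≥ b}`
(the bumped letter) by `b`. -/
def lIns {A : Type*} [LinearOrder A] (b : A) (δ : Finset A) : Finset A :=
  if h : (δ.filter (b ≤ ·)).Nonempty then
    insert b (δ.erase ((δ.filter (b ≤ ·)).min' h))
  else insert b δ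

/-- The right action of a word on a column, `γ·(uv) = (γ·u)·v`. -/
def rActW {A : Type*} [LinearOrder A] (γ : Finset A) (w : List A) : Finset A :=
  w.foldl rIns γ

/-- The left action of a word on a column, `(uv)·γ = u·(v·γ)`. -/
def lActW {A : Type*} [LinearOrder A] (w : List A) (γ : Finset A) : Finset A :=
  w.foldr lIns γ

/-- The strictly decreasing word of a column `γ ⊆ A`. -/
def decWord {A : Type*} [LinearOrder A] (γ : Finset A) : List A :=
  (γ.sort (· ≤ ·)).reverse

/-!
The right action of words on columns factors through the stylic monoid: each defining
relation of `≡_styl` acts identically on every column, because two insertions either bump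
disjoint letters (and commute), or the second insertion bumps the letter placed by the first
(and the first is absorbed). Since the decreasing word of `γ` builds `γ` from the empty column,
`γ·u = ∅·(γu) = ∅·(γv) = γ·v`.
-/

namespace StylicColumn

variable {A : Type*} [LinearOrder A]

section Insertion

variable {γ : Finset A} {a b c m : A}

lemma mem_rIns_self (γ : Finset A) (c : A) : c ∈ rIns γ c := by
  rw [rIns]; split_ifs <;> exact Finset.mem_insert_self _ _

lemma rIns_subset_insert (γ : Finset A) (c : A) : rIns γ c ⊆ insert c γ := by
  rw [rIns]; split_ifs
  · exact Finset.insert_subset_insert _ (Finset.erase_subset _ _)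
  · exact subset_rfl

lemma exists_isGreatest_le (h : ∃ x ∈ γ, x ≤ c) :
    ∃ m ∈ γ, m ≤ c ∧ ∀ x ∈ γ, x ≤ c → x ≤ m := by
  have hne : (γ.filter (· ≤ c)).Nonempty := by simpa [Finset.filter_nonempty_iff] using h
  obtain ⟨hmγ, hmc⟩ := Finset.mem_filter.mp (Finset.max'_mem _ hne)
  exact ⟨_, hmγ, hmc, fun x hx hxc => Finset.le_max' _ x (Finset.mem_filter.mpr ⟨hx, hxc⟩)⟩

lemma rIns_eq_insert_erase (hm : m ∈ γ) (hmc : m ≤ c) (hmax : ∀ x ∈ γ, x ≤ c → x ≤ m) :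
    rIns γ c = insert c (γ.erase m) := by
  have hmf : m ∈ γ.filter (· ≤ c) := Finset.mem_filter.mpr ⟨hm, hmc⟩
  have hbump : (γ.filter (· ≤ c)).max' ⟨m, hmf⟩ = m :=
    le_antisymm (Finset.max'_le _ _ _ fun x hx => hmax x (Finset.mem_filter.mp hx).1
      (Finset.mem_filter.mp hx).2) (Finset.le_max' _ _ hmf)
  rw [rIns, dif_pos ⟨m, hmf⟩, hbump]

lemma rIns_eq_insert (h : ∀ x ∈ γ, c < x) : rIns γ c = insert c γ := by
  have hne : ¬ (γ.filter (· ≤ c)).Nonempty := by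
    rintro ⟨x, hx⟩
    exact (Finset.mem_filter.mp hx).2.not_gt (h x (Finset.mem_filter.mp hx).1)
  rw [rIns, dif_neg hne]

lemma rIns_eq_self (ha : a ∈ γ) : rIns γ a = γ := by
  rw [rIns_eq_insert_erase ha le_rfl fun x _ hx => hx, Finset.insert_erase ha]

lemma mem_rIns_of_lt (hx : m ∈ γ) (h : c < m) : m ∈ rIns γ c := by
  rw [rIns]; split_ifs with hne
  · refine Finset.mem_insert_of_mem (Finset.mem_erase.mpr ⟨fun heq => ?_, hx⟩)
    exact (Finset.mem_filter.mp (heq ▸ Finset.max'_mem _ hne)).2.not_gt h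
  · exact Finset.mem_insert_of_mem hx

/-- A letter `b ∈ γ` with `a < b ≤ c` separates the letters bumped by `a` and by `c`. -/
lemma rIns_rIns_comm (hb : b ∈ γ) (hab : a < b) (hbc : b ≤ c) :
    rIns (rIns γ a) c = rIns (rIns γ c) a := by
  obtain ⟨M, hMγ, hMc, hMmax⟩ := exists_isGreatest_le ⟨b, hb, hbc⟩
  have haM : a < M := hab.trans_le (hMmax b hb hbc)
  have hac : a < c := haM.trans_le hMc
  have hγc : rIns γ c = insert c (γ.erase M) := rIns_eq_insert_erase hMγ hMc hMmax
  by_cases hFa : ∃ x ∈ γ, x ≤ a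
  · obtain ⟨m, hmγ, hma, hmmax⟩ := exists_isGreatest_le hFa
    have hmM : m < M := hma.trans_lt haM
    have hL : rIns (insert a (γ.erase m)) c = insert c ((insert a (γ.erase m)).erase M) := by
      refine rIns_eq_insert_erase
        (Finset.mem_insert_of_mem (Finset.mem_erase.mpr ⟨hmM.ne', hMγ⟩)) hMc fun x hx hxc => ?_
      rcases Finset.mem_insert.mp hx with rfl | hx
      · exact haM.le
      · exact hMmax x (Finset.mem_of_mem_erase hx) hxc
    have hR : rIns (insert c (γ.erase M)) a = insert a ((insert c (γ.erase M)).erase m) := by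
      refine rIns_eq_insert_erase
        (Finset.mem_insert_of_mem (Finset.mem_erase.mpr ⟨hmM.ne, hmγ⟩)) hma fun x hx hxa => ?_
      rcases Finset.mem_insert.mp hx with rfl | hx
      · exact absurd hxa hac.not_ge
      · exact hmmax x (Finset.mem_of_mem_erase hx) hxa
    rw [rIns_eq_insert_erase hmγ hma hmmax, hγc, hL, hR, Finset.erase_insert_of_ne haM.ne,
      Finset.erase_insert_of_ne (hmM.trans_le hMc).ne', Finset.insert_comm,
      Finset.erase_right_comm]
  · push Not at hFa
    have hL : rIns (insert a γ) c = insert c ((insert a γ).erase M) := by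
      refine rIns_eq_insert_erase (Finset.mem_insert_of_mem hMγ) hMc fun x hx hxc => ?_
      rcases Finset.mem_insert.mp hx with rfl | hx
      · exact haM.le
      · exact hMmax x hx hxc
    have hR : rIns (insert c (γ.erase M)) a = insert a (insert c (γ.erase M)) := by
      refine rIns_eq_insert fun x hx => ?_
      rcases Finset.mem_insert.mp hx with rfl | hx
      · exact hac
      · exact hFa x (Finset.mem_of_mem_erase hx)
    rw [rIns_eq_insert hFa, hγc, hL, hR, Finset.erase_insert_of_ne haM.ne, Finset.insert_comm]

/-- With no letter of `γ` in `(a, b]`, the letter `b` bumps the `a` just inserted, which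
had itself taken the place of the letter `b` would have bumped. -/
lemma rIns_rIns_absorb (hab : a < b) (h : ∀ y ∈ γ, a < y → b < y) :
    rIns (rIns γ a) b = rIns γ b := by
  have hbound : ∀ x ∈ γ, x ≤ b → x ≤ a := fun x hx hxb =>
    not_lt.mp fun hax => (h x hx hax).not_ge hxb
  have hL : ∀ δ : Finset A, (∀ x ∈ δ, x ≤ b → x ≤ a) →
      rIns (insert a δ) b = insert b ((insert a δ).erase a) := fun δ hδ =>
    rIns_eq_insert_erase (Finset.mem_insert_self _ _) hab.le fun x hx hxb => by
      rcases Finset.mem_insert.mp hx with rfl | hx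
      · exact le_rfl
      · exact hδ x hx hxb
  by_cases hFa : ∃ x ∈ γ, x ≤ a
  · obtain ⟨m, hmγ, hma, hmmax⟩ := exists_isGreatest_le hFa
    have haγ : a ∉ γ.erase m := fun hmem => (Finset.mem_erase.mp hmem).1
      (le_antisymm hma (hmmax a (Finset.mem_erase.mp hmem).2 le_rfl)).symm
    rw [rIns_eq_insert_erase hmγ hma hmmax,
      hL _ fun x hx hxb => hbound x (Finset.mem_of_mem_erase hx) hxb,
      rIns_eq_insert_erase hmγ (hma.trans hab.le) fun x hx hxb => hmmax x hx (hbound x hx hxb),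
      Finset.erase_insert haγ]
  · push Not at hFa
    have haγ : a ∉ γ := fun hmem => (hFa a hmem).false
    rw [rIns_eq_insert hFa, hL γ hbound, Finset.erase_insert haγ,
      rIns_eq_insert fun x hx => not_le.mp fun hxb => (hFa x hx).not_ge (hbound x hx hxb)]

end Insertion

@[simp] lemma rActW_nil (γ : Finset A) : rActW γ [] = γ := rfl

@[simp] lemma rActW_cons (γ : Finset A) (c : A) (l : List A) :
    rActW γ (c :: l) = rActW (rIns γ c) l := rfl

lemma rActW_append (γ : Finset A) (u v : List A) :
    rActW γ (u ++ v) = rActW (rActW γ u) v :=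
  List.foldl_append

def rActCon (A : Type*) [LinearOrder A] : Con (FreeMonoid A) where
  r w w' := ∀ γ, rActW γ w.toList = rActW γ w'.toList
  iseqv := ⟨fun _ _ => rfl, fun h γ => (h γ).symm, fun h h' γ => (h γ).trans (h' γ)⟩
  mul' {w w' x x'} h h' γ := by
    simp only [toList_mul, rActW_append, h γ, h' (rActW γ w'.toList)]

lemma rActW_eq_of_stylicRel {w w' : FreeMonoid A} (h : StylicRel A w w') (γ : Finset A) :
    rActW γ w.toList = rActW γ w'.toList := by
  cases h <;> simp only [toList_ofList, rActW_cons, rActW_nil]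
  case knuth1 a b c hab hbc =>
    exact rIns_rIns_comm (mem_rIns_self γ b) hab hbc.le
  case knuth2 a b c hab hbc =>
    by_cases hsep : ∃ y ∈ γ, a < y ∧ y ≤ c
    · obtain ⟨y, hy, hay, hyc⟩ := hsep
      rw [rIns_rIns_comm hy hay hyc]
    · push Not at hsep
      have hsep' : ∀ y ∈ rIns γ c, a < y → b < y := fun y hy hay => by
        rcases Finset.mem_insert.mp (rIns_subset_insert γ c hy) with rfl | hy
        · exact hbc
        · exact hbc.trans (hsep y hy hay)
      rw [rIns_rIns_absorb (hab.trans hbc) hsep, rIns_rIns_absorb hab hsep']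
  case knuth3 a b hab =>
    rw [rIns_eq_self (mem_rIns_self γ b), rIns_eq_self (mem_rIns_of_lt (mem_rIns_self γ b) hab)]
  case knuth4 a b hab =>
    rw [rIns_eq_self (mem_rIns_self (rIns γ b) a)]
    by_cases hsep : ∃ y ∈ γ, a < y ∧ y ≤ b
    · obtain ⟨y, hy, hay, hyb⟩ := hsep
      rw [rIns_rIns_comm hy hay hyb, rIns_eq_self (mem_rIns_self (rIns γ b) a)]
    · push Not at hsep
      rw [rIns_rIns_absorb hab hsep]
  case idem a =>
    exact rIns_eq_self (mem_rIns_self γ a)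

lemma stylCon_le_rActCon : stylCon A ≤ rActCon A :=
  Con.conGen_le.mpr fun _ _ h => rActW_eq_of_stylicRel h

lemma rActW_eq_union_of_pairwise_gt {l : List A} (hl : l.Pairwise (· > ·)) {δ : Finset A}
    (hδ : ∀ x ∈ δ, ∀ y ∈ l, y < x) : rActW δ l = δ ∪ l.toFinset := by
  induction l generalizing δ with
  | nil => simp
  | cons c l ih =>
    obtain ⟨hc, hl⟩ := List.pairwise_cons.mp hl
    have hcδ : rIns δ c = insert c δ := rIns_eq_insert fun x hx => hδ x hx c List.mem_cons_self
    rw [rActW_cons, hcδ, ih hl, List.toFinset_cons, Finset.insert_union, Finset.union_insert]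
    rintro x hx y hy
    rcases Finset.mem_insert.mp hx with rfl | hx
    · exact hc y hy
    · exact hδ x hx y (List.mem_cons_of_mem c hy)

lemma rActW_empty_decWord (γ : Finset A) : rActW ∅ (decWord γ) = γ := by
  have hdec : (decWord γ).Pairwise (· > ·) :=
    List.pairwise_reverse.mpr (List.sortedLT_iff_pairwise.mp (Finset.sortedLT_sort γ))
  rw [rActW_eq_union_of_pairwise_gt hdec (by simp), Finset.empty_union, decWord,
    List.toFinset_reverse, Finset.sort_toFinset]

end StylicColumn

open StylicColumn in
/-- Lemma `gammau`: if `γu ≡_styl γv` then the right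
actions of `u` and `v` send `γ` to the same column. -/
theorem congr_implies_same_right_action {A : Type*} [LinearOrder A]
    (γ : Finset A) (u v : List A)
    (h : stylCon A (ofList (decWord γ ++ u)) (ofList (decWord γ ++ v))) :
    rActW γ u = rActW γ v := by
  have hact := stylCon_le_rActCon h ∅
  rwa [toList_ofList, toList_ofList, rActW_append, rActW_append, rActW_empty_decWord] at hact
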